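/- Let V be a purely even restricted vertex algebra. Then for a, b ∈ A = V₀ and x ∈ V₁, the associativity defect is (ab)x - a(bx) = -π(x)(a)·db - π(x)(b)·da, where d = ∂ and products are _{(-1)}. -/
import Mathlib

open scoped BigOperators

/-- The generalized binomial coefficient `C(m, j)` for `m ∈ ℤ`, as a complex number. -/
noncomputable def binom (m : ℤ) (j : ℕ) : ℂ :=
  (∏ i ∈ Finset.range j, ((m : ℂ) - (i : ℂ))) / (Nat.factorial j : ℂ)

/-- A purely even restricted graded vertex algebra: a vertex algebra (vacuum, Fourier modes
`coeff a n = a_{(n)}`, translation operator `T = ∂`, vacuum axiom, translation invariance and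
the Borcherds identity) together with a grading by conformal weights `wt : ℤ → Submodule ℂ V`
(the eigenspace decomposition of the Hamiltonian `H`), with no negative conformal weights,
`vac` of weight `0`, and such that `a_{(n)} : V_Δ ⊗ V_{Δ'} → V_{Δ+Δ'-n-1}`. -/
structure RestrictedVA (V : Type*) [AddCommGroup V] [Module ℂ V] where
  vac : V
  coeff : V → ℤ → Module.End ℂ V
  T : Module.End ℂ V
  wt : ℤ → Submodule ℂ V
  coeff_add : ∀ (a b : V) (n : ℤ), coeff (a + b) n = coeff a n + coeff b n
  coeff_smul : ∀ (c : ℂ) (a : V) (n : ℤ), coeff (c • a) n = c • coeff a n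
  truncation : ∀ a b : V, ∃ N : ℤ, ∀ n ≥ N, coeff a n b = 0
  vac_field : ∀ n : ℤ, coeff vac n = if n = -1 then (1 : Module.End ℂ V) else 0
  T_vac : T vac = 0
  creation_nonneg : ∀ (a : V) (n : ℤ), 0 ≤ n → coeff a n vac = 0
  creation_neg_one : ∀ a : V, coeff a (-1) vac = a
  translation : ∀ (a : V) (n : ℤ),
    T * coeff a n - coeff a n * T = ((-n : ℤ) : ℂ) • coeff a (n - 1)
  borcherds : ∀ (a b c : V) (m n k : ℤ),
    (∑ᶠ j : ℕ, binom m j • coeff (coeff a (n + j) b) (m + k - j) c) =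
      (∑ᶠ j : ℕ, ((-1 : ℂ) ^ j * binom n j) • coeff a (n + m - j) (coeff b (k + j) c)) -
      (∑ᶠ j : ℕ, ((-1 : ℂ) ^ ((j : ℤ) + n) * binom n j) •
        coeff b (n + k - j) (coeff a (m + j) c))
  wt_neg : ∀ d : ℤ, d < 0 → wt d = ⊥
  vac_wt : vac ∈ wt 0
  wt_indep : ∀ d : ℤ, Disjoint (wt d) (⨆ (e : ℤ) (_ : e ≠ d), wt e)
  wt_top : (⨆ d : ℤ, wt d) = ⊤
  wt_coeff : ∀ {a b : V} {d e : ℤ} (n : ℤ),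
    a ∈ wt d → b ∈ wt e → coeff a n b ∈ wt (d + e - n - 1)

/-- The subspace `Ω ⊆ V₁` spanned by the elements `a ∂b` with `a, b ∈ A = V₀`
(the product being `a_{(-1)}`). -/
def RestrictedVA.Omega {V : Type*} [AddCommGroup V] [Module ℂ V] (W : RestrictedVA V) :
    Submodule ℂ V :=
  Submodule.span ℂ {x | ∃ a b : V, a ∈ W.wt 0 ∧ b ∈ W.wt 0 ∧ x = W.coeff a (-1) (W.T b)}

section Binom

lemma binom_zero' (m : ℤ) : binom m 0 = 1 := by simp [binom]

lemma binom_zero_pos (j : ℕ) (hj : j ≠ 0) : binom 0 j = 0 := by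
  have h : (∏ i ∈ Finset.range j, ((0 : ℂ) - (i : ℂ))) = 0 :=
    Finset.prod_eq_zero (Finset.mem_range.mpr (Nat.pos_of_ne_zero hj)) (by simp)
  rw [binom]
  push_cast
  rw [h, zero_div]

lemma binom_one_one : binom 1 1 = 1 := by simp [binom]

lemma binom_one_ge (j : ℕ) (hj : 2 ≤ j) : binom 1 j = 0 := by
  have h : (∏ i ∈ Finset.range j, ((1 : ℂ) - (i : ℂ))) = 0 :=
    Finset.prod_eq_zero (Finset.mem_range.mpr hj) (by simp)
  rw [binom]
  push_cast
  rw [h, zero_div]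

lemma prod_neg_one (j : ℕ) :
    (∏ i ∈ Finset.range j, ((-1 : ℂ) - (i : ℂ))) = (-1) ^ j * (Nat.factorial j : ℂ) := by
  induction j with
  | zero => simp
  | succ n ih =>
      rw [Finset.prod_range_succ, ih, Nat.factorial_succ]
      push_cast
      ring

lemma binom_neg_one (j : ℕ) : binom (-1) j = (-1) ^ j := by
  have hf : (Nat.factorial j : ℂ) ≠ 0 := Nat.cast_ne_zero.mpr (Nat.factorial_ne_zero j)
  rw [binom]
  push_cast
  rw [prod_neg_one, mul_div_assoc, div_self hf, mul_one]

lemma prod_neg_two (j : ℕ) :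
    (∏ i ∈ Finset.range j, ((-2 : ℂ) - (i : ℂ))) = (-1) ^ j * (Nat.factorial (j + 1) : ℂ) := by
  induction j with
  | zero => simp
  | succ n ih =>
      rw [Finset.prod_range_succ, ih, Nat.factorial_succ (n + 1)]
      push_cast
      ring

lemma binom_neg_two (j : ℕ) : binom (-2) j = (-1) ^ j * ((j : ℂ) + 1) := by
  have hf : (Nat.factorial j : ℂ) ≠ 0 := Nat.cast_ne_zero.mpr (Nat.factorial_ne_zero j)
  rw [binom]
  push_cast
  rw [prod_neg_two, Nat.factorial_succ]
  push_cast
  field_simp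

end Binom

namespace RestrictedVA

variable {V : Type*} [AddCommGroup V] [Module ℂ V] (W : RestrictedVA V)

lemma coeff_zero_left (n : ℤ) : W.coeff 0 n = 0 := by
  have h := W.coeff_smul 0 0 n
  simpa using h

lemma eq_zero_of_wt_neg {p : V} {d : ℤ} (hp : p ∈ W.wt d) (hd : d < 0) : p = 0 := by
  rw [W.wt_neg d hd] at hp
  simpa using hp

/-- vanishing of modes forced by the grading -/
lemma coeff_vanish {p q : V} {d e : ℤ} (n : ℤ) (hp : p ∈ W.wt d) (hq : q ∈ W.wt e)
    (h : d + e - n - 1 < 0) : W.coeff p n q = 0 :=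
  W.eq_zero_of_wt_neg (W.wt_coeff n hp hq) h

lemma vac_coeff_apply (n : ℤ) (c : V) :
    W.coeff W.vac n c = if n = -1 then c else 0 := by
  rw [W.vac_field]
  split <;> simp

/-- `y_{(-2)} |0⟩ = T y` -/
lemma coeff_neg_two_vac (y : V) : W.coeff y (-2) W.vac = W.T y := by
  have h := congrArg (fun f : Module.End ℂ V => f W.vac) (W.translation y (-1))
  simp only [LinearMap.sub_apply, Module.End.mul_apply, LinearMap.smul_apply] at h
  rw [W.creation_neg_one, W.T_vac, map_zero] at h
  norm_num at h
  exact h.symm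

/-- `(T y)_{(-1)} c = y_{(-2)} c` : Borcherds with `b = vac`, `m = 0`, `n = -2`, `k = -1`. -/
lemma T_coeff_neg_one (y c : V) : W.coeff (W.T y) (-1) c = W.coeff y (-2) c := by
  have h := W.borcherds y W.vac c 0 (-2) (-1)
  have h1 : (∑ᶠ j : ℕ, binom 0 j • W.coeff (W.coeff y (-2 + j) W.vac) (0 + -1 - j) c)
      = W.coeff (W.T y) (-1) c := by
    rw [finsum_eq_single _ 0 (by
      intro j hj
      rw [binom_zero_pos j hj, zero_smul])]
    norm_num [binom_zero', W.coeff_neg_two_vac]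
  have h2 : (∑ᶠ j : ℕ, ((-1 : ℂ) ^ j * binom (-2) j) •
      W.coeff y (-2 + 0 - j) (W.coeff W.vac (-1 + j) c)) = W.coeff y (-2) c := by
    rw [finsum_eq_single _ 0 (by
      intro j hj
      have hne : (-1 + (j : ℤ)) ≠ -1 := by omega
      rw [W.vac_coeff_apply, if_neg hne, map_zero, smul_zero])]
    norm_num [binom_zero', W.vac_coeff_apply]
  have h3 : (∑ᶠ j : ℕ, ((-1 : ℂ) ^ ((j : ℤ) + -2) * binom (-2) j) •
      W.coeff W.vac (-2 + -1 - j) (W.coeff y (0 + j) c)) = 0 := by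
    apply finsum_eq_zero_of_forall_eq_zero
    intro j
    have hne : (-2 + -1 - (j : ℤ)) ≠ -1 := by omega
    rw [W.vac_coeff_apply, if_neg hne, smul_zero]
  rw [h1, h2, h3] at h
  simpa using h

/-- `(T y)_{(0)} c = 0` : Borcherds with `b = vac`, `m = 0`, `n = -2`, `k = 0`. -/
lemma T_coeff_zero (y c : V) : W.coeff (W.T y) 0 c = 0 := by
  have h := W.borcherds y W.vac c 0 (-2) 0
  have h1 : (∑ᶠ j : ℕ, binom 0 j • W.coeff (W.coeff y (-2 + j) W.vac) (0 + 0 - j) c)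
      = W.coeff (W.T y) 0 c := by
    rw [finsum_eq_single _ 0 (by
      intro j hj
      rw [binom_zero_pos j hj, zero_smul])]
    norm_num [binom_zero', W.coeff_neg_two_vac]
  have h2 : (∑ᶠ j : ℕ, ((-1 : ℂ) ^ j * binom (-2) j) •
      W.coeff y (-2 + 0 - j) (W.coeff W.vac (0 + j) c)) = 0 := by
    apply finsum_eq_zero_of_forall_eq_zero
    intro j
    have hne : (0 + (j : ℤ)) ≠ -1 := by omega
    rw [W.vac_coeff_apply, if_neg hne, map_zero, smul_zero]
  have h3 : (∑ᶠ j : ℕ, ((-1 : ℂ) ^ ((j : ℤ) + -2) * binom (-2) j) •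
      W.coeff W.vac (-2 + 0 - j) (W.coeff y (0 + j) c)) = 0 := by
    apply finsum_eq_zero_of_forall_eq_zero
    intro j
    have hne : (-2 + 0 - (j : ℤ)) ≠ -1 := by omega
    rw [W.vac_coeff_apply, if_neg hne, smul_zero]
  rw [h1, h2, h3] at h
  simpa using h

/-- Skew-symmetry at level 0 : for `p ∈ V₀`, `x ∈ V₁`, `p_{(0)} x = - x_{(0)} p`.
Borcherds with `c = vac`, `m = -1`, `n = 1`, `k = -1`. -/
lemma skew_zero {p x : V} (hp : p ∈ W.wt 0) (hx : x ∈ W.wt 1) :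
    W.coeff p 0 x = -(W.coeff x 0 p) := by
  have h := W.borcherds p x W.vac (-1) 1 (-1)
  have h1 : (∑ᶠ j : ℕ, binom (-1) j • W.coeff (W.coeff p (1 + j) x) (-1 + -1 - j) W.vac)
      = 0 := by
    apply finsum_eq_zero_of_forall_eq_zero
    intro j
    rw [W.coeff_vanish (1 + j) hp hx (by omega), W.coeff_zero_left]
    simp
  have h2 : (∑ᶠ j : ℕ, ((-1 : ℂ) ^ j * binom 1 j) •
      W.coeff p (1 + -1 - j) (W.coeff x (-1 + j) W.vac)) = W.coeff p 0 x := by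
    rw [finsum_eq_single _ 0 (by
      intro j hj
      rcases Nat.lt_or_ge j 2 with hj2 | hj2
      · interval_cases j
        · exact absurd rfl hj
        · rw [show (-1 + (1:ℕ) : ℤ) = 0 by norm_num, W.creation_nonneg x 0 le_rfl,
            map_zero, smul_zero]
      · rw [binom_one_ge j hj2, mul_zero, zero_smul])]
    norm_num [binom_zero', W.creation_neg_one]
  have h3 : (∑ᶠ j : ℕ, ((-1 : ℂ) ^ ((j : ℤ) + 1) * binom 1 j) •
      W.coeff x (1 + -1 - j) (W.coeff p (-1 + j) W.vac)) = -(W.coeff x 0 p) := by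
    rw [finsum_eq_single _ 0 (by
      intro j hj
      rcases Nat.lt_or_ge j 2 with hj2 | hj2
      · interval_cases j
        · exact absurd rfl hj
        · rw [show (-1 + (1:ℕ) : ℤ) = 0 by norm_num, W.creation_nonneg p 0 le_rfl,
            map_zero, smul_zero]
      · rw [binom_one_ge j hj2, mul_zero, zero_smul])]
    norm_num [binom_zero', W.creation_neg_one]
  rw [h1, h2, h3] at h
  linear_combination (norm := module) -h

/-- For `u ∈ V₁`, `v ∈ V₀` : `T(u_{(0)} v) = u_{(-1)} v - v_{(-1)} u`.
Borcherds with `c = vac`, `m = -1`, `n = 0`, `k = -1`. -/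
lemma comm_vac {u v : V} (hu : u ∈ W.wt 1) (hv : v ∈ W.wt 0) :
    W.T (W.coeff u 0 v) = W.coeff u (-1) v - W.coeff v (-1) u := by
  have h := W.borcherds u v W.vac (-1) 0 (-1)
  have h1 : (∑ᶠ j : ℕ, binom (-1) j • W.coeff (W.coeff u (0 + j) v) (-1 + -1 - j) W.vac)
      = W.T (W.coeff u 0 v) := by
    rw [finsum_eq_single _ 0 (by
      intro j hj
      rw [W.coeff_vanish (0 + j) hu hv (by omega), W.coeff_zero_left]
      simp)]
    norm_num [binom_neg_one, W.coeff_neg_two_vac]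
  have h2 : (∑ᶠ j : ℕ, ((-1 : ℂ) ^ j * binom 0 j) •
      W.coeff u (0 + -1 - j) (W.coeff v (-1 + j) W.vac)) = W.coeff u (-1) v := by
    rw [finsum_eq_single _ 0 (by
      intro j hj
      rw [binom_zero_pos j hj, mul_zero, zero_smul])]
    norm_num [binom_zero', W.creation_neg_one]
  have h3 : (∑ᶠ j : ℕ, ((-1 : ℂ) ^ ((j : ℤ) + 0) * binom 0 j) •
      W.coeff v (0 + -1 - j) (W.coeff u (-1 + j) W.vac)) = W.coeff v (-1) u := by
    rw [finsum_eq_single _ 0 (by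
      intro j hj
      rw [binom_zero_pos j hj, mul_zero, zero_smul])]
    norm_num [binom_zero', W.creation_neg_one]
  rw [h1, h2, h3] at h
  exact h

/-- `T a ∈ V₁` for `a ∈ V₀`. -/
lemma T_wt_one {a : V} (ha : a ∈ W.wt 0) : W.T a ∈ W.wt 1 := by
  rw [← W.coeff_neg_two_vac]
  have := W.wt_coeff (-2) ha W.vac_wt
  norm_num at this
  exact this

end RestrictedVA

/-- In a purely even restricted vertex algebra, for `a, b ∈ A = V₀` and
`x ∈ V₁`, the associativity defect is `(ab)x - a(bx) = -π(x)(a)·db - π(x)(b)·da`, where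
`d = ∂`, `π(x)(a) = x_{(0)}a`, and the products are `_{(-1)}`. -/
theorem associativity_defect {V : Type*} [AddCommGroup V] [Module ℂ V]
    (W : RestrictedVA V) (a b x : V)
    (ha : a ∈ W.wt 0) (hb : b ∈ W.wt 0) (hx : x ∈ W.wt 1) :
    W.coeff (W.coeff a (-1) b) (-1) x - W.coeff a (-1) (W.coeff b (-1) x) =
      -(W.coeff (W.coeff x 0 a) (-1) (W.T b)) - W.coeff (W.coeff x 0 b) (-1) (W.T a) := by
  -- Main Borcherds instance with (m, n, k) = (0, -1, -1)
  have h := W.borcherds a b x 0 (-1) (-1)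
  have h1 : (∑ᶠ j : ℕ, binom 0 j • W.coeff (W.coeff a (-1 + j) b) (0 + -1 - j) x)
      = W.coeff (W.coeff a (-1) b) (-1) x := by
    rw [finsum_eq_single _ 0 (by
      intro j hj
      rw [binom_zero_pos j hj, zero_smul])]
    norm_num [binom_zero']
  have h2 : (∑ᶠ j : ℕ, ((-1 : ℂ) ^ j * binom (-1) j) •
      W.coeff a (-1 + 0 - j) (W.coeff b (-1 + j) x)) =
      W.coeff a (-1) (W.coeff b (-1) x) + W.coeff a (-2) (W.coeff b 0 x) := by
    rw [finsum_eq_sum_of_support_subset _ (s := {0, 1}) (by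
      intro j hj
      simp only [Function.mem_support] at hj
      by_contra hmem
      simp only [Finset.coe_insert, Finset.coe_singleton, Set.mem_insert_iff,
        Set.mem_singleton_iff] at hmem
      push_neg at hmem
      have hj2 : 2 ≤ j := by omega
      apply hj
      rw [W.coeff_vanish (-1 + j) hb hx (by omega), map_zero, smul_zero]),
      Finset.sum_pair (by norm_num)]
    norm_num [binom_neg_one]
  have h3 : (∑ᶠ j : ℕ, ((-1 : ℂ) ^ ((j : ℤ) + -1) * binom (-1) j) •
      W.coeff b (-1 + -1 - j) (W.coeff a (0 + j) x)) =
      -(W.coeff b (-2) (W.coeff a 0 x)) := by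
    rw [finsum_eq_single _ 0 (by
      intro j hj
      rw [W.coeff_vanish (0 + (j : ℤ)) ha hx (by omega), map_zero, smul_zero])]
    rw [binom_neg_one]
    norm_num
  rw [h1, h2, h3] at h
  -- so  (ab)_{(-1)} x = a_{(-1)}(b_{(-1)} x) + a_{(-2)}(b_{(0)} x) + b_{(-2)}(a_{(0)} x)
  -- rewrite the two correction terms
  have hxa : W.coeff x 0 a ∈ W.wt 0 := by
    have := W.wt_coeff 0 hx ha; norm_num at this; exact this
  have hxb : W.coeff x 0 b ∈ W.wt 0 := by
    have := W.wt_coeff 0 hx hb; norm_num at this; exact this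
  have ha2 : W.coeff a (-2) (W.coeff b 0 x) = -(W.coeff (W.coeff x 0 b) (-1) (W.T a)) := by
    rw [← W.T_coeff_neg_one, W.skew_zero hb hx, map_neg]
    have hc := W.comm_vac (W.T_wt_one ha) hxb
    rw [W.T_coeff_zero, map_zero] at hc
    rw [sub_eq_zero.mp hc.symm]
  have hb2 : W.coeff b (-2) (W.coeff a 0 x) = -(W.coeff (W.coeff x 0 a) (-1) (W.T b)) := by
    rw [← W.T_coeff_neg_one, W.skew_zero ha hx, map_neg]
    have hc := W.comm_vac (W.T_wt_one hb) hxa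
    rw [W.T_coeff_zero, map_zero] at hc
    rw [sub_eq_zero.mp hc.symm]
  rw [ha2, hb2] at h
  linear_combination (norm := abel) h
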